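/- For all n ≥ 1 and k ≥ 3, every vertex of W = Y(1,1) ∪ Y(2,2) that lies in Y(1,1) is adjacent in H(n,k) to exactly one vertex in Y(2,2), and vice versa; in particular the subgraph induced by Y(1,1) ∪ Y(2,2) is a perfect matching when the two sets have equal size. -/
import Mathlib


/-- Two vertices of the Hamming graph `H(n,k)` are adjacent iff they differ
in exactly one coordinate. -/
def HAdj {n k : ℕ} (v w : Fin n → ZMod k) : Prop := ∃! i, v i ≠ w i

/-- `X n k s` is the set of vertices whose coordinate sum is `s` in `ZMod k`. -/
def X (n k : ℕ) (s : ZMod k) : Set (Fin n → ZMod k) := {v | ∑ i, v i = s}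

/-- `ellN v` is the (0-based) largest index at which `v` is nonzero (0 if `v = 0`). -/
def ellN {n k : ℕ} (v : Fin n → ZMod k) : ℕ :=
  (Finset.univ.filter (fun i => v i ≠ 0)).sup (fun i : Fin n => (i : ℕ))

/-- `Y n k s t` is the set of nonzero vertices with coordinate sum `s`
whose last nonzero coordinate equals `t`. -/
def Y (n k : ℕ) (s t : ZMod k) : Set (Fin n → ZMod k) :=
  {v | v ≠ 0 ∧ ∑ i, v i = s ∧ ∃ i : Fin n, (i : ℕ) = ellN v ∧ v i = t}

lemma le_ellN {n k : ℕ} (v : Fin n → ZMod k) (j : Fin n) (h : v j ≠ 0) :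
    (j : ℕ) ≤ ellN v :=
  Finset.le_sup (by simp [h])

lemma ellN_eq {n k : ℕ} (v : Fin n → ZMod k) (i : Fin n) (hi : v i ≠ 0)
    (h : ∀ j : Fin n, (i : ℕ) < (j : ℕ) → v j = 0) : ellN v = (i : ℕ) := by
  refine le_antisymm (Finset.sup_le ?_) (le_ellN v i hi)
  intro j hj
  simp only [Finset.mem_filter] at hj
  by_contra hlt
  exact hj.2 (h j (lt_of_not_ge hlt))

lemma sum_update {n k : ℕ} (v : Fin n → ZMod k) (i : Fin n) (b : ZMod k) :
    ∑ j, Function.update v i b j = ∑ j, v j - v i + b := by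
  rw [Finset.sum_update_of_mem (Finset.mem_univ i),
    Finset.sum_eq_sum_sdiff_singleton_add (Finset.mem_univ i) v]
  ring

lemma key {n k : ℕ} (s t d : ZMod k) (hd : d ≠ 0) (ht : t ≠ 0)
    (h1 : t + d ≠ 0) (h2 : t + d ≠ d) (h3 : t + d ≠ t) :
    ∀ v ∈ Y n k s t, ∃! w, w ∈ Y n k (s + d) (t + d) ∧ HAdj v w := by
  rintro v ⟨hv0, hsum, i₀, hi₀, hvi₀⟩
  have hzero : ∀ j : Fin n, (i₀ : ℕ) < (j : ℕ) → v j = 0 := by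
    intro j hj
    by_contra h
    have := le_ellN v j h
    omega
  refine ⟨Function.update v i₀ (t + d), ⟨⟨?_, ?_, i₀, ?_, ?_⟩, ?_⟩, ?_⟩
  · intro h
    have := congrFun h i₀
    simp at this
    exact h1 this
  · rw [sum_update, hsum, hvi₀]; ring
  · rw [ellN_eq]
    · simp [h1]
    · intro j hj
      rw [Function.update_of_ne (by intro h; subst h; omega)]
      exact hzero j hj
  · simp
  · refine ⟨i₀, ?_, ?_⟩
    · simp only [Function.update_self, hvi₀]
      exact fun h => h3 h.symm
    · intro j hj
      by_contra h
      rw [Function.update_of_ne h] at hj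
      exact hj rfl
  · rintro w' ⟨⟨hw'0, hsum', i₂, hi₂, hwi₂⟩, i, hi, huniq⟩
    have heq : ∀ j, j ≠ i → w' j = v j := by
      intro j hj
      by_contra h
      exact hj (huniq j (fun h' => h h'.symm))
    have hupd : w' = Function.update v i (w' i) := by
      funext j
      rcases eq_or_ne j i with rfl | h
      · simp
      · rw [Function.update_of_ne h, heq j h]
    have hdi : w' i = v i + d := by
      have h' : ∑ j, w' j = s - v i + w' i := by
        conv_lhs => rw [hupd]
        rw [sum_update, hsum]
      rw [hsum'] at h'
      linear_combination -h'
    rcases lt_trichotomy (i : ℕ) (i₀ : ℕ) with hlt | heqi | hgt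
    · exfalso
      have hne : i ≠ i₀ := fun h => by subst h; omega
      have hwℓ : w' i₀ = t := by rw [heq i₀ (Ne.symm hne), hvi₀]
      have : ellN w' = (i₀ : ℕ) := by
        refine ellN_eq w' i₀ (by rw [hwℓ]; exact ht) ?_
        intro j hj
        rw [heq j (by intro h; subst h; omega)]
        exact hzero j hj
      have : i₂ = i₀ := Fin.ext (by omega)
      subst this
      rw [hwℓ] at hwi₂
      exact h3 hwi₂.symm
    · have : i = i₀ := Fin.ext heqi
      subst this
      rw [hupd, hdi, hvi₀]
    · exfalso
      have hvi : v i = 0 := hzero i hgt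
      have hwd : w' i = d := by rw [hdi, hvi, zero_add]
      have : ellN w' = (i : ℕ) := by
        refine ellN_eq w' i (by rw [hwd]; exact hd) ?_
        intro j hj
        rw [heq j (by intro h; subst h; omega)]
        exact hzero j (by omega)
      have : i₂ = i := Fin.ext (by omega)
      subst this
      rw [hwd] at hwi₂
      exact h2 hwi₂.symm

theorem stmt17 (n k : ℕ) (hn : 1 ≤ n) (hk : 3 ≤ k) :
    (∀ v ∈ Y n k 1 1, ∃! w, w ∈ Y n k 2 2 ∧ HAdj v w) ∧
    (∀ w ∈ Y n k 2 2, ∃! v, v ∈ Y n k 1 1 ∧ HAdj w v) := by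
  haveI : NeZero k := ⟨by omega⟩
  have hcast : ∀ m : ℕ, 0 < m → m < k → (m : ZMod k) ≠ 0 := by
    intro m hm hmk h
    rw [ZMod.natCast_eq_zero_iff] at h
    exact absurd (Nat.le_of_dvd hm h) (by omega)
  have h1 : (1 : ZMod k) ≠ 0 := by simpa using hcast 1 (by omega) (by omega)
  have h2 : (2 : ZMod k) ≠ 0 := by
    have := hcast 2 (by omega) (by omega); simpa using this
  have h21 : (2 : ZMod k) ≠ 1 := by
    intro h; apply h1; linear_combination h
  have hm1 : (-1 : ZMod k) ≠ 0 := by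
    intro h; apply h1; linear_combination -h
  have h1m1 : (1 : ZMod k) ≠ -1 := by
    intro h; apply h2; linear_combination h
  have e2 : (1 : ZMod k) + 1 = 2 := by ring
  constructor
  · intro v hv
    have := key (n := n) 1 1 1 h1 h1 (by rw [e2]; exact h2) (by rw [e2]; exact h21)
      (by rw [e2]; exact h21) v hv
    rwa [e2] at this
  · intro w hw
    have e1 : (2 : ZMod k) + (-1) = 1 := by ring
    have := key (n := n) 2 2 (-1) hm1 h2 (by rw [e1]; exact h1) (by rw [e1]; exact h1m1)
      (by rw [e1]; exact h21.symm) w hw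
    rwa [e1] at this
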